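/- For continuous maps f_0,…,f_{m−1}:X→X and φ∈C(X,ℝ), the topological pressure of the free semigroup action equals sup_α { limsup_{n→∞}(1/n) log q_n(φ,α) }, where the supremum is taken over all open covers α of X. In particular, P(f_0,…,f_{m−1},φ) does not depend on the metric on X (only on the topology). -/

import Mathlib

open Filter Topology MeasureTheory Set

namespace FSA

/-- `f_w = f_{w₁} ∘ ⋯ ∘ f_{w_k}` for the word `w = [w₁,…,w_k]`; the empty word acts as
the identity. -/
def wordMap {X : Type*} {ι : Type*} (f : ι → X → X) : List ι → X → X
  | [] => id
  | a :: t => f a ∘ wordMap f t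

/-- `(S_wφ)(x) = Σ_{w'} φ(f_{w'}x)`, summing over the `|w|` words `w'` consisting of the
empty word and the proper suffixes of `w`. -/
noncomputable def birkhoff {X : Type*} {ι : Type*} (f : ι → X → X) (φ : X → ℝ)
    (w : List ι) (x : X) : ℝ :=
  (w.tails.tail.map fun w' => φ (wordMap f w' x)).sum

section Core

variable {X : Type*} {ι : Type*}

/-- Bowen metric `d_w(x,y) = max_{w'≤w} d(f_{w'}x, f_{w'}y)`, the maximum ranging over all
suffixes of `w` (including `w` itself and the empty word). -/
noncomputable def bowenDist [PseudoMetricSpace X] (f : ι → X → X) (w : List ι) (x y : X) : ℝ :=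
  (w.tails.map fun w' => dist (wordMap f w' x) (wordMap f w' y)).foldr max 0

/-- `E` is a `(w,ε)`-spanning set. -/
def IsSpanningSet [PseudoMetricSpace X] (f : ι → X → X) (w : List ι) (ε : ℝ)
    (E : Finset X) : Prop :=
  ∀ x : X, ∃ y ∈ E, bowenDist f w x y < ε

/-- `E` is a `(w,ε)`-separated set. -/
def IsSeparatedSet [PseudoMetricSpace X] (f : ι → X → X) (w : List ι) (ε : ℝ)
    (E : Finset X) : Prop :=
  ∀ x ∈ E, ∀ y ∈ E, x ≠ y → ε ≤ bowenDist f w x y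

/-- `Q_w(φ,ε) = inf { Σ_{x∈E} e^{(S_wφ)(x)} : E a (w,ε)-spanning set }`. -/
noncomputable def Qword [PseudoMetricSpace X] (f : ι → X → X) (φ : X → ℝ) (w : List ι)
    (ε : ℝ) : ℝ :=
  sInf {s : ℝ | ∃ E : Finset X, IsSpanningSet f w ε E ∧
    s = ∑ x ∈ E, Real.exp (birkhoff f φ w x)}

/-- `P_w(φ,ε) = sup { Σ_{x∈E} e^{(S_wφ)(x)} : E a (w,ε)-separated set }`. -/
noncomputable def Pword [PseudoMetricSpace X] (f : ι → X → X) (φ : X → ℝ) (w : List ι)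
    (ε : ℝ) : ℝ :=
  sSup {s : ℝ | ∃ E : Finset X, IsSeparatedSet f w ε E ∧
    s = ∑ x ∈ E, Real.exp (birkhoff f φ w x)}

/-- `Q_n(φ,ε) = m^{-n} Σ_{|w|=n} Q_w(φ,ε)`. -/
noncomputable def Qn [PseudoMetricSpace X] [Fintype ι] (f : ι → X → X) (φ : X → ℝ)
    (n : ℕ) (ε : ℝ) : ℝ :=
  (1 / (Fintype.card ι : ℝ) ^ n) * ∑ w : Fin n → ι, Qword f φ (List.ofFn w) ε

/-- `P_n(φ,ε) = m^{-n} Σ_{|w|=n} P_w(φ,ε)`. -/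
noncomputable def Pn [PseudoMetricSpace X] [Fintype ι] (f : ι → X → X) (φ : X → ℝ)
    (n : ℕ) (ε : ℝ) : ℝ :=
  (1 / (Fintype.card ι : ℝ) ^ n) * ∑ w : Fin n → ι, Pword f φ (List.ofFn w) ε

/-- Topological pressure of the free semigroup action,
`P(f₀,…,f_{m-1},φ) = lim_{ε→0} limsup_{n→∞} (1/n) log Q_n(φ,ε)`.
Since the inner quantity is nonincreasing in `ε`, the limit as `ε → 0⁺` equals the
supremum over `ε > 0`. -/
noncomputable def pressure [PseudoMetricSpace X] [Fintype ι] (f : ι → X → X) (φ : X → ℝ) :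
    EReal :=
  ⨆ (ε : ℝ) (_ : 0 < ε),
    Filter.limsup (fun n : ℕ => (↑(Real.log (Qn f φ n ε) / (n : ℝ)) : EReal)) atTop

end Core

section Cover

variable {X : Type*} {ι : Type*}

/-- `α` is an open cover of `X`. -/
def IsOpenCover [TopologicalSpace X] (α : Set (Set X)) : Prop :=
  (∀ A ∈ α, IsOpen A) ∧ ⋃₀ α = Set.univ

/-- The members of the join `⋁_{w'≤w} f_{w'}⁻¹ α`, the join taken over the `|w|` words `w'`
consisting of the empty word and the proper suffixes of `w`. -/
def coverJoin (f : ι → X → X) (α : Set (Set X)) (w : List ι) : Set (Set X) :=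
  {B | ∃ c : List ι → Set X, (∀ w' ∈ w.tails.tail, c w' ∈ α) ∧
    B = ⋂ w' ∈ w.tails.tail, wordMap f w' ⁻¹' c w'}

/-- `β` is a finite subcover of the join `⋁_{w'≤w} f_{w'}⁻¹ α`. -/
def IsFiniteSubcover (f : ι → X → X) (α : Set (Set X)) (w : List ι)
    (β : Finset (Set X)) : Prop :=
  (↑β : Set (Set X)) ⊆ coverJoin f α w ∧ ⋃₀ (↑β : Set (Set X)) = Set.univ

/-- `q_w(φ,α) = inf { Σ_{B∈β} inf_{x∈B} e^{(S_wφ)(x)} : β a finite subcover }`. -/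
noncomputable def qword (f : ι → X → X) (φ : X → ℝ) (α : Set (Set X)) (w : List ι) : ℝ :=
  sInf {s : ℝ | ∃ β : Finset (Set X), IsFiniteSubcover f α w β ∧
    s = ∑ B ∈ β, sInf ((fun x => Real.exp (birkhoff f φ w x)) '' B)}

/-- `p_w(φ,α) = inf { Σ_{B∈β} sup_{x∈B} e^{(S_wφ)(x)} : β a finite subcover }`. -/
noncomputable def pword (f : ι → X → X) (φ : X → ℝ) (α : Set (Set X)) (w : List ι) : ℝ :=
  sInf {s : ℝ | ∃ β : Finset (Set X), IsFiniteSubcover f α w β ∧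
    s = ∑ B ∈ β, sSup ((fun x => Real.exp (birkhoff f φ w x)) '' B)}

/-- `q_n(φ,α) = m^{-n} Σ_{|w|=n} q_w(φ,α)`. -/
noncomputable def qn [Fintype ι] (f : ι → X → X) (φ : X → ℝ) (α : Set (Set X)) (n : ℕ) : ℝ :=
  (1 / (Fintype.card ι : ℝ) ^ n) * ∑ w : Fin n → ι, qword f φ α (List.ofFn w)

/-- `p_n(φ,α) = m^{-n} Σ_{|w|=n} p_w(φ,α)`. -/
noncomputable def pn [Fintype ι] (f : ι → X → X) (φ : X → ℝ) (α : Set (Set X)) (n : ℕ) : ℝ :=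
  (1 / (Fintype.card ι : ℝ) ^ n) * ∑ w : Fin n → ι, pword f φ α (List.ofFn w)

end Cover

/-!
Two comparisons at the level of a single word `w` give the formula. If `δ` is a Lebesgue
number of `α`, a `(w,δ)`-spanning set `E` indexes a subcover of the join, one member per point of
`E`, so `q_w(φ,α) ≤ Q_w(φ,δ)`. Conversely, if `α` consists of balls of radius `η/2`, with `η`
small for the uniform continuity of `φ` and of the `f_i`, every member of the join has
`d_w`-diameter `< ε` and `S_wφ` oscillates by at most `|w|δ` on it, so choosing one point per
member gives `Q_w(φ,ε) ≤ e^{|w|δ} q_w(φ,α)`. Averaging over words, taking `(1/n) log` and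
letting `δ → 0` yields the two inequalities. Invariance under conjugacy comes from uniform
continuity of the homeomorphism, which carries `(w,η)`-spanning sets to `(w,ε)`-spanning sets.
-/

noncomputable def growthRate (u : ℕ → ℝ) : EReal :=
  limsup (fun n : ℕ => ((Real.log (u n) / (n : ℝ) : ℝ) : EReal)) atTop

section GrowthRate

lemma le_of_forall_pos_le_coe_add {a b : EReal} (h : ∀ δ : ℝ, 0 < δ → a ≤ δ + b) : a ≤ b := by
  induction b with
  | bot => simpa using h 1 one_pos
  | top => exact le_top
  | coe s =>
    refine EReal.le_of_forall_lt_iff_le.1 fun z hz => ?_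
    have := h (z - s) (sub_pos.2 (EReal.coe_lt_coe_iff.1 hz))
    rwa [← EReal.coe_add, sub_add_cancel] at this

lemma growthRate_le_add {u v : ℕ → ℝ} {δ : ℝ}
    (h : ∀ᶠ n in atTop, 0 < u n ∧ u n ≤ Real.exp (n * δ) * v n) :
    growthRate u ≤ δ + growthRate v := by
  calc growthRate u
      ≤ limsup (fun n : ℕ => (δ : EReal) + ((Real.log (v n) / (n : ℝ) : ℝ) : EReal)) atTop := by
        refine limsup_le_limsup ?_
        filter_upwards [h, eventually_gt_atTop 0] with n ⟨hu, huv⟩ hn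
        have hv : 0 < v n := pos_of_mul_pos_right (hu.trans_le huv) (Real.exp_pos _).le
        have hlog : Real.log (u n) ≤ n * δ + Real.log (v n) := by
          simpa [Real.log_mul, hv.ne'] using Real.log_le_log hu huv
        have hn' : (0 : ℝ) < n := Nat.cast_pos.2 hn
        rw [← EReal.coe_add, EReal.coe_le_coe_iff, div_le_iff₀ hn', add_mul,
          div_mul_cancel₀ _ hn'.ne']
        linarith
    _ ≤ δ + growthRate v := by
        refine (EReal.limsup_add_le (f := atTop) (u := fun _ => (δ : EReal))
          (v := fun n : ℕ => ((Real.log (v n) / (n : ℝ) : ℝ) : EReal))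
          (by simp) (by simp)).trans_eq ?_
        rw [limsup_const]
        rfl

lemma growthRate_mono {u v : ℕ → ℝ} (h : ∀ᶠ n in atTop, 0 < u n ∧ u n ≤ v n) :
    growthRate u ≤ growthRate v := by
  simpa using growthRate_le_add (δ := 0) (by simpa using h)

end GrowthRate

section Bowen

variable {X ι : Type*} [PseudoMetricSpace X] {f : ι → X → X} {w : List ι} {x y : X} {ε : ℝ}

lemma foldr_max_zero_lt_iff {l : List ℝ} {c : ℝ} :
    l.foldr max 0 < c ↔ 0 < c ∧ ∀ a ∈ l, a < c := by
  induction l with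
  | nil => simp
  | cons a t ih => simp only [List.foldr_cons, max_lt_iff, ih, List.forall_mem_cons]; tauto

lemma le_foldr_max_zero {l : List ℝ} {a : ℝ} (ha : a ∈ l) : a ≤ l.foldr max 0 := by
  induction l with
  | nil => simp at ha
  | cons b t ih =>
    rcases List.mem_cons.1 ha with rfl | ha
    · exact le_max_left _ _
    · exact (ih ha).trans (le_max_right _ _)

lemma bowenDist_lt_iff :
    bowenDist f w x y < ε ↔
      0 < ε ∧ ∀ w' ∈ w.tails, dist (wordMap f w' x) (wordMap f w' y) < ε := by
  simp only [bowenDist, foldr_max_zero_lt_iff, List.forall_mem_map]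

lemma dist_le_bowenDist {w' : List ι} (h : w' ∈ w.tails) :
    dist (wordMap f w' x) (wordMap f w' y) ≤ bowenDist f w x y :=
  le_foldr_max_zero (List.mem_map_of_mem h)

lemma bowenDist_self_lt (hε : 0 < ε) : bowenDist f w x x < ε :=
  bowenDist_lt_iff.2 ⟨hε, by simpa using fun _ _ => hε⟩

lemma continuous_wordMap {Y : Type*} [TopologicalSpace Y] {f : ι → Y → Y}
    (hf : ∀ i, Continuous (f i)) (w : List ι) : Continuous (wordMap f w) := by
  induction w with
  | nil => exact continuous_id
  | cons a t ih => exact (hf a).comp ih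

lemma isOpen_setOf_bowenDist_lt (hf : ∀ i, Continuous (f i)) (hε : 0 < ε) (y : X) :
    IsOpen {x | bowenDist f w x y < ε} := by
  have : {x | bowenDist f w x y < ε} =
      ⋂ w' ∈ {w' | w' ∈ w.tails}, wordMap f w' ⁻¹' Metric.ball (wordMap f w' y) ε := by
    ext x
    simp [bowenDist_lt_iff, hε]
  rw [this]
  exact (List.finite_toSet _).isOpen_biInter
    fun w' _ => Metric.isOpen_ball.preimage (continuous_wordMap hf w')

end Bowen

section Birkhoff

variable {X ι : Type*} {f : ι → X → X} {φ : X → ℝ} {w : List ι} {x y : X}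

lemma continuous_birkhoff [TopologicalSpace X] (hf : ∀ i, Continuous (f i))
    (hφ : Continuous φ) (w : List ι) : Continuous (birkhoff f φ w) :=
  continuous_list_sum _ fun w' _ => hφ.comp (continuous_wordMap hf w')

lemma birkhoff_le_add {c : ℝ}
    (h : ∀ w' ∈ w.tails.tail, φ (wordMap f w' x) ≤ φ (wordMap f w' y) + c) :
    birkhoff f φ w x ≤ birkhoff f φ w y + w.length * c := by
  calc birkhoff f φ w x
      ≤ (w.tails.tail.map fun w' => φ (wordMap f w' y) + c).sum := List.sum_le_sum h
    _ = birkhoff f φ w y + w.length * c := by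
        simp only [birkhoff, List.sum_map_add, List.map_const', List.sum_replicate, nsmul_eq_mul,
          List.length_tail, List.length_tails, add_tsub_cancel_right]

end Birkhoff

section Spanning

variable {X ι : Type*} [PseudoMetricSpace X] {f : ι → X → X} {φ : X → ℝ} {w : List ι} {ε : ℝ}

lemma exists_isSpanningSet [CompactSpace X] (hf : ∀ i, Continuous (f i)) (w : List ι)
    (hε : 0 < ε) : ∃ E : Finset X, IsSpanningSet f w ε E := by
  obtain ⟨E, hE⟩ := isCompact_univ.elim_finite_subcover _
    (isOpen_setOf_bowenDist_lt hf hε) fun x _ => mem_iUnion.2 ⟨x, bowenDist_self_lt hε⟩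
  exact ⟨E, fun x => by simpa using hE (mem_univ x)⟩

lemma Qword_le_sum {E : Finset X} (hE : IsSpanningSet f w ε E) :
    Qword f φ w ε ≤ ∑ x ∈ E, Real.exp (birkhoff f φ w x) :=
  csInf_le ⟨0, by rintro s ⟨E, -, rfl⟩; positivity⟩ ⟨E, hE, rfl⟩

lemma le_Qword [CompactSpace X] (hf : ∀ i, Continuous (f i)) (hε : 0 < ε) {c : ℝ}
    (h : ∀ E : Finset X, IsSpanningSet f w ε E → c ≤ ∑ x ∈ E, Real.exp (birkhoff f φ w x)) :
    c ≤ Qword f φ w ε := by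
  obtain ⟨E, hE⟩ := exists_isSpanningSet hf w hε
  exact le_csInf ⟨_, E, hE, rfl⟩ (by rintro s ⟨E', hE', rfl⟩; exact h E' hE')

lemma Qword_pos [CompactSpace X] [Nonempty X] (hf : ∀ i, Continuous (f i))
    (hφ : Continuous φ) (hε : 0 < ε) : 0 < Qword f φ w ε := by
  obtain ⟨x₀, -, hx₀⟩ := isCompact_univ.exists_isMinOn univ_nonempty
    (continuous_birkhoff hf hφ w).continuousOn
  refine (Real.exp_pos (birkhoff f φ w x₀)).trans_le (le_Qword hf hε fun E hE => ?_)
  obtain ⟨y, hy, -⟩ := hE x₀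
  calc Real.exp (birkhoff f φ w x₀) ≤ Real.exp (birkhoff f φ w y) :=
        Real.exp_le_exp.2 (hx₀ (mem_univ y))
    _ ≤ ∑ x ∈ E, Real.exp (birkhoff f φ w x) :=
        Finset.single_le_sum (fun x _ => (Real.exp_pos _).le) hy

end Spanning

section Subcover

variable {X ι : Type*} {f : ι → X → X} {φ : X → ℝ} {α : Set (Set X)} {w : List ι}

lemma sInf_exp_birkhoff_nonneg (B : Set X) :
    0 ≤ sInf ((fun x => Real.exp (birkhoff f φ w x)) '' B) :=
  Real.sInf_nonneg (by rintro _ ⟨x, -, rfl⟩; positivity)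

lemma qword_le_sum {β : Finset (Set X)} (hβ : IsFiniteSubcover f α w β) :
    qword f φ α w ≤ ∑ B ∈ β, sInf ((fun x => Real.exp (birkhoff f φ w x)) '' B) :=
  csInf_le ⟨0, by rintro s ⟨β, -, rfl⟩; exact Finset.sum_nonneg fun B _ =>
    sInf_exp_birkhoff_nonneg B⟩ ⟨β, hβ, rfl⟩

variable [TopologicalSpace X]

lemma IsOpenCover.isOpen_of_mem_coverJoin (hα : IsOpenCover α) (hf : ∀ i, Continuous (f i))
    {B : Set X} (hB : B ∈ coverJoin f α w) : IsOpen B := by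
  obtain ⟨c, hc, rfl⟩ := hB
  exact ((List.finite_toSet _).subset fun _ h => h).isOpen_biInter
    fun w' hw' => (hα.1 _ (hc w' hw')).preimage (continuous_wordMap hf w')

lemma IsOpenCover.exists_mem_coverJoin (hα : IsOpenCover α) (x : X) :
    ∃ B ∈ coverJoin f α w, x ∈ B := by
  choose c hcα hxc using fun w' : List ι => sUnion_eq_univ_iff.1 hα.2 (wordMap f w' x)
  exact ⟨_, ⟨c, fun w' _ => hcα w', rfl⟩, mem_biInter fun w' _ => hxc w'⟩

lemma IsOpenCover.exists_isFiniteSubcover [CompactSpace X] (hα : IsOpenCover α)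
    (hf : ∀ i, Continuous (f i)) (w : List ι) : ∃ β, IsFiniteSubcover f α w β := by
  classical
  obtain ⟨t, ht⟩ := isCompact_univ.elim_finite_subcover (fun B : coverJoin f α w => (B : Set X))
    (fun B => hα.isOpen_of_mem_coverJoin hf B.2) fun x _ => by
      obtain ⟨B, hB, hxB⟩ := hα.exists_mem_coverJoin (f := f) (w := w) x
      exact mem_iUnion.2 ⟨⟨B, hB⟩, hxB⟩
  refine ⟨t.image Subtype.val, ?_, eq_univ_of_forall fun x => ?_⟩
  · simp
  · obtain ⟨B, hB, hxB⟩ := mem_iUnion₂.1 (ht (mem_univ x))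
    exact ⟨B, by simpa using hB, hxB⟩

lemma le_qword [CompactSpace X] (hf : ∀ i, Continuous (f i)) (hα : IsOpenCover α) {c : ℝ}
    (h : ∀ β, IsFiniteSubcover f α w β →
      c ≤ ∑ B ∈ β, sInf ((fun x => Real.exp (birkhoff f φ w x)) '' B)) :
    c ≤ qword f φ α w := by
  obtain ⟨β, hβ⟩ := hα.exists_isFiniteSubcover hf w
  exact le_csInf ⟨_, β, hβ, rfl⟩ (by rintro s ⟨β', hβ', rfl⟩; exact h β' hβ')

lemma qword_pos [CompactSpace X] [Nonempty X] (hf : ∀ i, Continuous (f i))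
    (hφ : Continuous φ) (hα : IsOpenCover α) : 0 < qword f φ α w := by
  obtain ⟨x₀, -, hx₀⟩ := isCompact_univ.exists_isMinOn univ_nonempty
    (continuous_birkhoff hf hφ w).continuousOn
  refine (Real.exp_pos (birkhoff f φ w x₀)).trans_le (le_qword hf hα fun β hβ => ?_)
  obtain ⟨B, hB, hx₀B⟩ := sUnion_eq_univ_iff.1 hβ.2 x₀
  calc Real.exp (birkhoff f φ w x₀)
      ≤ sInf ((fun x => Real.exp (birkhoff f φ w x)) '' B) :=
        le_csInf ⟨_, mem_image_of_mem _ hx₀B⟩ (by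
          rintro _ ⟨x, -, rfl⟩; exact Real.exp_le_exp.2 (hx₀ (mem_univ x)))
    _ ≤ ∑ B ∈ β, sInf ((fun x => Real.exp (birkhoff f φ w x)) '' B) :=
        Finset.single_le_sum (fun B _ => sInf_exp_birkhoff_nonneg B) hB

end Subcover

section Average

variable {X ι : Type*} [PseudoMetricSpace X] [CompactSpace X] [Nonempty X] [Fintype ι] [Nonempty ι]
  {f : ι → X → X} {φ : X → ℝ}

lemma Qn_pos (hf : ∀ i, Continuous (f i)) (hφ : Continuous φ) (n : ℕ) {ε : ℝ} (hε : 0 < ε) :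
    0 < Qn f φ n ε := by
  have := Fintype.card_pos (α := ι)
  exact mul_pos (by positivity)
    (Finset.sum_pos (fun w _ => Qword_pos hf hφ hε) Finset.univ_nonempty)

lemma qn_pos (hf : ∀ i, Continuous (f i)) (hφ : Continuous φ) {α : Set (Set X)}
    (hα : IsOpenCover α) (n : ℕ) : 0 < qn f φ α n := by
  have := Fintype.card_pos (α := ι)
  exact mul_pos (by positivity)
    (Finset.sum_pos (fun w _ => qword_pos hf hφ hα) Finset.univ_nonempty)

end Average

section CoverBelowPressure

variable {X ι : Type*} [PseudoMetricSpace X] [CompactSpace X] {f : ι → X → X} {φ : X → ℝ}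

lemma qword_le_Qword_of_lebesgue (hf : ∀ i, Continuous (f i)) {α : Set (Set X)} {δ : ℝ}
    (hδ : 0 < δ) (hLeb : ∀ x, ∃ A ∈ α, Metric.ball x δ ⊆ A) (w : List ι) :
    qword f φ α w ≤ Qword f φ w δ := by
  classical
  refine le_Qword hf hδ fun E hE => ?_
  choose A hAα hballA using hLeb
  let B : X → Set X := fun y => ⋂ w' ∈ w.tails.tail, wordMap f w' ⁻¹' A (wordMap f w' y)
  have hball : ∀ x y, bowenDist f w x y < δ → x ∈ B y := fun x y hxy =>
    mem_biInter fun w' hw' => hballA _ <| Metric.mem_ball.2 <|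
      (dist_le_bowenDist (List.mem_of_mem_tail hw')).trans_lt hxy
  have hβ : IsFiniteSubcover f α w (E.image B) := by
    refine ⟨?_, eq_univ_of_forall fun x => ?_⟩
    · simp only [Finset.coe_image, image_subset_iff]
      exact fun y _ => ⟨fun w' => A (wordMap f w' y), fun w' _ => hAα _, rfl⟩
    · obtain ⟨y, hy, hxy⟩ := hE x
      exact ⟨B y, Finset.mem_coe.2 (Finset.mem_image_of_mem B hy), hball x y hxy⟩
  calc qword f φ α w ≤ ∑ C ∈ E.image B, sInf ((fun x => Real.exp (birkhoff f φ w x)) '' C) :=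
        qword_le_sum hβ
    _ ≤ ∑ y ∈ E, sInf ((fun x => Real.exp (birkhoff f φ w x)) '' B y) :=
        Finset.sum_image_le_of_nonneg fun C _ => sInf_exp_birkhoff_nonneg C
    _ ≤ ∑ y ∈ E, Real.exp (birkhoff f φ w y) :=
        Finset.sum_le_sum fun y _ => csInf_le ⟨0, by rintro _ ⟨x, -, rfl⟩; positivity⟩
          (mem_image_of_mem _ (hball y y (bowenDist_self_lt hδ)))

lemma growthRate_qn_le_pressure [Nonempty X] [Fintype ι] [Nonempty ι]
    (hf : ∀ i, Continuous (f i)) (hφ : Continuous φ) {α : Set (Set X)} (hα : IsOpenCover α) :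
    growthRate (qn f φ α) ≤ pressure f φ := by
  obtain ⟨δ, hδ, hLeb⟩ := lebesgue_number_lemma_of_metric_sUnion isCompact_univ hα.1
    hα.2.symm.subset
  refine le_trans ?_ (le_iSup₂_of_le δ hδ le_rfl)
  refine growthRate_mono (Eventually.of_forall fun n => ⟨qn_pos hf hφ hα n, ?_⟩)
  unfold qn Qn
  gcongr with w
  exact qword_le_Qword_of_lebesgue hf hδ (fun x => hLeb x (mem_univ x)) _

end CoverBelowPressure

section PressureBelowCover

variable {X ι : Type*} [PseudoMetricSpace X] {f : ι → X → X} {φ : X → ℝ}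

lemma Qword_le_exp_mul_sum_sInf [Nonempty X] {w : List ι} {ε c : ℝ} {β : Finset (Set X)}
    (hβ : ⋃₀ (β : Set (Set X)) = univ)
    (hdist : ∀ B ∈ β, ∀ x ∈ B, ∀ y ∈ B, bowenDist f w x y < ε)
    (hosc : ∀ B ∈ β, ∀ x ∈ B, ∀ y ∈ B, birkhoff f φ w x ≤ birkhoff f φ w y + c) :
    Qword f φ w ε ≤ Real.exp c * ∑ B ∈ β, sInf ((fun x => Real.exp (birkhoff f φ w x)) '' B) := by
  classical
  let pt : Set X → X := fun B => Classical.epsilon (· ∈ B)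
  have hpt : ∀ B : Set X, B.Nonempty → pt B ∈ B := fun _ hB => Classical.epsilon_spec hB
  -- an empty member has no point to pick, and it contributes `sInf ∅ = 0` on the right
  let β' := β.filter (·.Nonempty)
  have hE : IsSpanningSet f w ε (β'.image pt) := fun x => by
    obtain ⟨B, hB, hxB⟩ := sUnion_eq_univ_iff.1 hβ x
    exact ⟨pt B, Finset.mem_image_of_mem pt (Finset.mem_filter.2 ⟨hB, x, hxB⟩),
      hdist B hB x hxB _ (hpt B ⟨x, hxB⟩)⟩
  have hterm : ∀ B ∈ β', Real.exp (birkhoff f φ w (pt B)) ≤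
      Real.exp c * sInf ((fun x => Real.exp (birkhoff f φ w x)) '' B) := fun B hB => by
    obtain ⟨hBβ, hBne⟩ := Finset.mem_filter.1 hB
    rw [← div_le_iff₀' (Real.exp_pos c), ← Real.exp_sub]
    refine le_csInf (hBne.image _) ?_
    rintro _ ⟨x, hx, rfl⟩
    exact Real.exp_le_exp.2 (by linarith [hosc B hBβ _ (hpt B hBne) x hx])
  calc Qword f φ w ε ≤ ∑ x ∈ β'.image pt, Real.exp (birkhoff f φ w x) := Qword_le_sum hE
    _ ≤ ∑ B ∈ β', Real.exp (birkhoff f φ w (pt B)) :=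
        Finset.sum_image_le_of_nonneg fun _ _ => (Real.exp_pos _).le
    _ ≤ Real.exp c * ∑ B ∈ β', sInf ((fun x => Real.exp (birkhoff f φ w x)) '' B) := by
        rw [Finset.mul_sum]
        exact Finset.sum_le_sum hterm
    _ ≤ Real.exp c * ∑ B ∈ β, sInf ((fun x => Real.exp (birkhoff f φ w x)) '' B) := by
        gcongr
        · exact fun B _ _ => sInf_exp_birkhoff_nonneg B
        · exact Finset.filter_subset _ _

lemma isOpenCover_range_ball {r : ℝ} (hr : 0 < r) :
    IsOpenCover (range fun z : X => Metric.ball z r) :=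
  ⟨forall_mem_range.2 fun _ => Metric.isOpen_ball,
    sUnion_eq_univ_iff.2 fun x => ⟨_, mem_range_self x, Metric.mem_ball_self hr⟩⟩

lemma dist_lt_of_mem_coverJoin_range_ball {r : ℝ} {w w' : List ι} {B : Set X}
    (hB : B ∈ coverJoin f (range fun z : X => Metric.ball z (r / 2)) w)
    (hw' : w' ∈ w.tails.tail) {x y : X} (hx : x ∈ B) (hy : y ∈ B) :
    dist (wordMap f w' x) (wordMap f w' y) < r := by
  obtain ⟨c, hc, rfl⟩ := hB
  obtain ⟨z, hz⟩ := hc w' hw'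
  have hxz := mem_iInter₂.1 hx w' hw'
  have hyz := mem_iInter₂.1 hy w' hw'
  rw [← hz, mem_preimage, Metric.mem_ball] at hxz hyz
  linarith [dist_triangle_right (wordMap f w' x) (wordMap f w' y) z]

lemma exists_Qword_le_exp_mul_qword [CompactSpace X] [Nonempty X] [Fintype ι]
    (hf : ∀ i, Continuous (f i)) (hφ : Continuous φ) {ε δ : ℝ} (hε : 0 < ε) (hδ : 0 < δ) :
    ∃ α : Set (Set X), IsOpenCover α ∧ ∀ w : List ι, w ≠ [] →
      Qword f φ w ε ≤ Real.exp (w.length * δ) * qword f φ α w := by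
  obtain ⟨η₁, hη₁, hφη⟩ := Metric.uniformContinuous_iff.1
    (CompactSpace.uniformContinuous_of_continuous hφ) δ hδ
  -- the sup metric on `ι → X` gives one modulus of continuity for all the `f i` at once
  obtain ⟨η₂, hη₂, hfη⟩ := Metric.uniformContinuous_iff.1
    (CompactSpace.uniformContinuous_of_continuous (continuous_pi hf)) ε hε
  set η := min ε (min η₁ η₂)
  have hη : 0 < η := lt_min hε (lt_min hη₁ hη₂)
  have hα := isOpenCover_range_ball (X := X) (half_pos hη)
  refine ⟨_, hα, fun w hw => ?_⟩
  obtain ⟨a, t, rfl⟩ := List.exists_cons_of_ne_nil hw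
  have hclose : ∀ B ∈ coverJoin f (range fun z : X => Metric.ball z (η / 2)) (a :: t),
      ∀ x ∈ B, ∀ y ∈ B, ∀ w' ∈ t.tails, dist (wordMap f w' x) (wordMap f w' y) < η :=
    fun B hB x hx y hy w' hw' => by
      simpa using dist_lt_of_mem_coverJoin_range_ball hB (by simpa using hw') hx hy
  rw [← div_le_iff₀' (Real.exp_pos _)]
  refine le_qword hf hα fun β hβ => (div_le_iff₀' (Real.exp_pos _)).2 <|
    Qword_le_exp_mul_sum_sInf hβ.2 (fun B hB x hx y hy => ?_) (fun B hB x hx y hy => ?_)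
  · refine bowenDist_lt_iff.2 ⟨hε, ?_⟩
    simp only [List.tails_cons, List.forall_mem_cons]
    refine ⟨?_, fun w' hw' => (hclose B (hβ.1 hB) x hx y hy w' hw').trans_le (min_le_left _ _)⟩
    have hdist := hclose B (hβ.1 hB) x hx y hy t ((List.mem_tails _ _).2 (List.suffix_refl t))
    exact (dist_pi_lt_iff hε).1 (hfη (hdist.trans_le ((min_le_right _ _).trans
      (min_le_right _ _)))) a
  · refine birkhoff_le_add fun w' hw' => ?_
    have hdist := hclose B (hβ.1 hB) x hx y hy w' (by simpa using hw')
    have := hφη (hdist.trans_le ((min_le_right _ _).trans (min_le_left _ _)))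
    rw [Real.dist_eq] at this
    linarith [le_abs_self (φ (wordMap f w' x) - φ (wordMap f w' y))]

lemma pressure_le_iSup_growthRate_qn [CompactSpace X] [Nonempty X] [Fintype ι] [Nonempty ι]
    (hf : ∀ i, Continuous (f i)) (hφ : Continuous φ) :
    pressure f φ ≤ ⨆ (α : Set (Set X)) (_ : IsOpenCover α), growthRate (qn f φ α) := by
  refine iSup₂_le fun ε hε => le_of_forall_pos_le_coe_add fun δ hδ => ?_
  obtain ⟨α, hα, hQq⟩ := exists_Qword_le_exp_mul_qword hf hφ (ι := ι) hε hδ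
  refine (growthRate_le_add (v := qn f φ α) (δ := δ) ?_).trans ?_
  · filter_upwards [eventually_gt_atTop 0] with n hn
    refine ⟨Qn_pos hf hφ n hε, ?_⟩
    unfold Qn qn
    rw [mul_left_comm (Real.exp _), Finset.mul_sum _ _ (Real.exp _)]
    gcongr with w
    simpa using hQq (List.ofFn w) (by simpa using hn.ne')
  · gcongr
    exact le_iSup₂_of_le α hα le_rfl

end PressureBelowCover

section Conjugacy

variable {X Y ι : Type*} [PseudoMetricSpace X] [PseudoMetricSpace Y] {h : X ≃ₜ Y}
  {f : ι → X → X} {φ : X → ℝ}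

lemma continuous_conj {g : X → X} (hg : Continuous g) :
    Continuous ((h : X → Y) ∘ g ∘ (h.symm : Y → X)) :=
  h.continuous.comp (hg.comp h.symm.continuous)

lemma wordMap_conj (w : List ι) (x : X) :
    wordMap (fun i => (h : X → Y) ∘ f i ∘ (h.symm : Y → X)) w (h x) = h (wordMap f w x) := by
  induction w with
  | nil => rfl
  | cons a t ih => simp [wordMap, ih]

lemma birkhoff_conj (w : List ι) (x : X) :
    birkhoff (fun i => (h : X → Y) ∘ f i ∘ (h.symm : Y → X)) (φ ∘ (h.symm : Y → X)) w (h x) =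
      birkhoff f φ w x := by
  simp [birkhoff, wordMap_conj]

lemma Qword_conj_le [CompactSpace X] (hf : ∀ i, Continuous (f i)) {ε η : ℝ} (hε : 0 < ε)
    (hη : 0 < η) (hh : ∀ x y, dist x y < η → dist (h x) (h y) < ε) (w : List ι) :
    Qword (fun i => (h : X → Y) ∘ f i ∘ (h.symm : Y → X)) (φ ∘ (h.symm : Y → X)) w ε ≤
      Qword f φ w η := by
  classical
  refine le_Qword hf hη fun E hE => ?_
  have hspan : IsSpanningSet (fun i => (h : X → Y) ∘ f i ∘ (h.symm : Y → X)) w ε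
      (E.image h) := fun u => by
    obtain ⟨y, hy, hxy⟩ := hE (h.symm u)
    refine ⟨h y, Finset.mem_image_of_mem _ hy, bowenDist_lt_iff.2 ⟨hε, fun w' hw' => ?_⟩⟩
    rw [← h.apply_symm_apply u, wordMap_conj, wordMap_conj]
    exact hh _ _ ((dist_le_bowenDist hw').trans_lt hxy)
  refine (Qword_le_sum hspan).trans_eq ?_
  rw [Finset.sum_image fun a _ b _ hab => h.injective hab]
  simp only [birkhoff_conj]

lemma pressure_conj_le [CompactSpace X] [CompactSpace Y] [Nonempty Y] [Fintype ι]
    [Nonempty ι] (hf : ∀ i, Continuous (f i)) (hφ : Continuous φ) :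
    pressure (fun i => (h : X → Y) ∘ f i ∘ (h.symm : Y → X)) (φ ∘ (h.symm : Y → X)) ≤
      pressure f φ := by
  refine iSup₂_le fun ε hε => ?_
  obtain ⟨η, hη, hh⟩ := Metric.uniformContinuous_iff.1
    (CompactSpace.uniformContinuous_of_continuous h.continuous) ε hε
  refine le_trans ?_ (le_iSup₂_of_le η hη le_rfl)
  refine growthRate_mono (Eventually.of_forall fun n =>
    ⟨Qn_pos (fun i => continuous_conj (hf i)) (hφ.comp h.symm.continuous) n hε, ?_⟩)
  unfold Qn
  gcongr with w
  exact Qword_conj_le hf hε hη (fun _ _ hxy => hh hxy) _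

end Conjugacy

/-- The topological pressure equals
`sup_α limsup_{n→∞} (1/n) log q_n(φ,α)` over all open covers `α` of `X`; in particular it
does not depend on the metric (it is invariant under topological conjugacy). -/
theorem stmt_6 {X : Type*} [MetricSpace X] [CompactSpace X] [Nonempty X]
    {ι : Type*} [Fintype ι] [Nonempty ι]
    (f : ι → X → X) (hf : ∀ i, Continuous (f i))
    (φ : X → ℝ) (hφ : Continuous φ) :
    (pressure f φ = ⨆ (α : Set (Set X)) (_ : IsOpenCover α),
      Filter.limsup (fun n : ℕ => (↑(Real.log (qn f φ α n) / (n : ℝ)) : EReal)) atTop) ∧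
    (∀ (Y : Type*) [MetricSpace Y] [CompactSpace Y] [Nonempty Y] (h : X ≃ₜ Y),
      pressure (fun i => (h : X → Y) ∘ f i ∘ (h.symm : Y → X)) (φ ∘ (h.symm : Y → X)) =
        pressure f φ) := by
  refine ⟨le_antisymm (pressure_le_iSup_growthRate_qn hf hφ)
    (iSup₂_le fun α hα => growthRate_qn_le_pressure hf hφ hα), fun Y _ _ _ h => ?_⟩
  refine le_antisymm (pressure_conj_le hf hφ) ?_
  simpa [Function.comp_def] using pressure_conj_le (h := h.symm)
    (f := fun i => (h : X → Y) ∘ f i ∘ (h.symm : Y → X)) (φ := φ ∘ (h.symm : Y → X))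
    (fun i => continuous_conj (hf i)) (hφ.comp h.symm.continuous)

end FSA
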